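/- Every contractible finite abstract simplicial complex G has Euler characteristic χ(G) = 1. -/
import Mathlib


open Finset Polynomial

namespace SphereFormula

variable {V : Type} [DecidableEq V]

/-- A finite abstract simplicial complex: a finite collection of nonempty finite sets
that is closed under taking nonempty subsets. -/
def IsComplex (G : Finset (Finset V)) : Prop :=
  ∀ x ∈ G, x.Nonempty ∧ ∀ y, y ⊆ x → y.Nonempty → y ∈ G

/-- `w x = (-1)^(dim x)` where `dim x = |x| - 1`. -/
def w (x : Finset V) : ℤ := (-1) ^ (x.card - 1)

/-- Euler characteristic of a finite set of simplices: `χ(A) = Σ_{x ∈ A} w x`. -/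
def chi (A : Finset (Finset V)) : ℤ := ∑ x ∈ A, w x

/-- The star `U(x) = {y ∈ G : x ⊆ y}`. -/
def star (G : Finset (Finset V)) (x : Finset V) : Finset (Finset V) :=
  G.filter fun y => x ⊆ y

/-- The unit ball `B(x) = {z ∈ G : z ⊆ y for some y ∈ U(x)}` (closure of the star). -/
def ball (G : Finset (Finset V)) (x : Finset V) : Finset (Finset V) :=
  G.filter fun z => ∃ y ∈ G, x ⊆ y ∧ z ⊆ y

/-- The unit sphere `S(x) = B(x) \ U(x)`. -/
def sphere (G : Finset (Finset V)) (x : Finset V) : Finset (Finset V) :=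
  ball G x \ star G x

/-- The vertex set of `G`: those `v` with `{v} ∈ G`. -/
def verts (G : Finset (Finset V)) : Finset V :=
  (G.biUnion id).filter fun v => {v} ∈ G

/-- Contractibility, defined inductively: a single vertex complex is contractible, and `G`
is contractible if there is `x ∈ G` with both `S(x)` and `G \ U(x)` contractible. -/
inductive Contractible : Finset (Finset V) → Prop where
  | point (v : V) : Contractible ({({v} : Finset V)} : Finset (Finset V))
  | step (G : Finset (Finset V)) (x : Finset V) (hx : x ∈ G)
      (hS : Contractible (sphere G x)) (hG : Contractible (G \ star G x)) :
      Contractible G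

mutual
  /-- `G` is a `d`-manifold (`d ≥ 0`): every unit sphere `S(x)` is a `(d-1)`-sphere. -/
  inductive IsManifold : ℤ → Finset (Finset V) → Prop where
    | mk (d : ℤ) (G : Finset (Finset V)) (hd : 0 ≤ d)
        (h : ∀ x ∈ G, IsSphere (d - 1) (sphere G x)) : IsManifold d G

  /-- `d`-spheres: the empty complex is the `(-1)`-sphere, and a `d`-sphere is a
  `d`-manifold `G` such that `G \ U(x)` is contractible for some `x ∈ G`. -/
  inductive IsSphere : ℤ → Finset (Finset V) → Prop where
    | empty : IsSphere (-1) (∅ : Finset (Finset V))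
    | mk (d : ℤ) (G : Finset (Finset V)) (hm : IsManifold d G)
        (h : ∃ x ∈ G, Contractible (G \ star G x)) : IsSphere d G
end

/-- The f-function `f_G(t) = 1 + Σ_{k ≥ 0} f_k(G) t^(k+1) = 1 + Σ_{x ∈ G} t^|x|`. -/
noncomputable def fPoly (G : Finset (Finset V)) : Polynomial ℚ :=
  1 + ∑ x ∈ G, Polynomial.X ^ x.card

/-- `F_H(t) = ∫_0^t f_H(s) ds = t + Σ_{k ≥ 0} f_k(H) t^(k+2)/(k+2)`. -/
noncomputable def FPoly (H : Finset (Finset V)) : Polynomial ℚ :=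
  Polynomial.X +
    ∑ x ∈ H, Polynomial.C (((x.card : ℚ) + 1)⁻¹) * Polynomial.X ^ (x.card + 1)

/-- The join `G + H = G ∪ H ∪ {x ∪ y : x ∈ G, y ∈ H}`. -/
def joinC (G H : Finset (Finset V)) : Finset (Finset V) :=
  G ∪ H ∪ (G ×ˢ H).image fun p => p.1 ∪ p.2

/-- The barycentric refinement: simplices are the nonempty chains in `(G, ⊆)`. -/
def bary (G : Finset (Finset V)) : Finset (Finset (Finset V)) :=
  G.powerset.filter fun c => c.Nonempty ∧ ∀ x ∈ c, ∀ y ∈ c, x ⊆ y ∨ y ⊆ x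

/-- `f` is locally injective: distinct vertices of a common simplex have distinct values. -/
def LocallyInjective (G : Finset (Finset V)) (f : V → ℤ) : Prop :=
  ∀ x ∈ G, ∀ v ∈ x, ∀ u ∈ x, v ≠ u → f v ≠ f u

lemma mem_sphere_iff' (G : Finset (Finset V)) (x z : Finset V) :
    z ∈ sphere G x ↔ (z ∈ G ∧ ∃ y ∈ G, x ⊆ y ∧ z ⊆ y) ∧ ¬ x ⊆ z := by
  simp only [sphere, ball, star, mem_sdiff, mem_filter]
  tauto

lemma isComplex_sphere (G : Finset (Finset V)) (hG : IsComplex G) (x : Finset V) :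
    IsComplex (sphere G x) := by
  intro z hz
  rw [mem_sphere_iff'] at hz
  obtain ⟨⟨hzG, y, hyG, hxy, hzy⟩, hnx⟩ := hz
  refine ⟨(hG z hzG).1, fun s hsz hsne => ?_⟩
  rw [mem_sphere_iff']
  exact ⟨⟨(hG z hzG).2 s hsz hsne, y, hyG, hxy, hsz.trans hzy⟩,
    fun h => hnx (h.trans hsz)⟩

lemma isComplex_sdiff_star (G : Finset (Finset V)) (hG : IsComplex G) (x : Finset V) :
    IsComplex (G \ star G x) := by
  intro z hz
  simp only [star, mem_sdiff, mem_filter, not_and] at hz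
  obtain ⟨hzG, hnx⟩ := hz
  refine ⟨(hG z hzG).1, fun s hsz hsne => ?_⟩
  simp only [star, mem_sdiff, mem_filter, not_and]
  have hsG : s ∈ G := (hG z hzG).2 s hsz hsne
  exact ⟨hsG, fun _ h => hnx hzG (h.trans hsz)⟩

omit [DecidableEq V] in
lemma w_add_w_eq_zero {a b : Finset V} (h : a.card = b.card + 1) (hb : 1 ≤ b.card) :
    w a + w b = 0 := by
  obtain ⟨m, hm⟩ := Nat.exists_eq_add_of_le hb
  unfold w
  rw [h, hm]
  have h1 : 1 + m + 1 - 1 = m + 1 := by omega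
  have h2 : 1 + m - 1 = m := by omega
  rw [h1, h2, pow_succ]
  ring

lemma chi_ball_eq_one (G : Finset (Finset V)) (hG : IsComplex G) (x : Finset V)
    (hx : x ∈ G) : chi (ball G x) = 1 := by
  classical
  obtain ⟨v, hv⟩ := (hG x hx).1
  have hvG : ({v} : Finset V) ∈ G :=
    (hG x hx).2 {v} (singleton_subset_iff.mpr hv) (singleton_nonempty v)
  have hvb : ({v} : Finset V) ∈ ball G x := by
    simp only [ball, mem_filter]
    exact ⟨hvG, x, hx, subset_rfl, singleton_subset_iff.mpr hv⟩
  have key : ∑ z ∈ (ball G x).erase {v}, w z = 0 := by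
    apply Finset.sum_involution
      (g := fun z _ => if v ∈ z then z.erase v else insert v z)
    · -- sums to zero
      intro z hz
      have hzb := Finset.mem_of_mem_erase hz
      have hzne := Finset.ne_of_mem_erase hz
      simp only [ball, mem_filter] at hzb
      obtain ⟨hzG, y, hyG, hxy, hzy⟩ := hzb
      by_cases hvz : v ∈ z
      · simp only [hvz, if_true]
        have hcard : z.card = (z.erase v).card + 1 :=
          (Finset.card_erase_add_one hvz).symm
        have hne : (z.erase v).Nonempty := by
          rcases Finset.eq_empty_or_nonempty (z.erase v) with h | h
          · exfalso
            rcases (Finset.erase_eq_empty_iff z v).mp h with h' | h'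
            · exact (hG z hzG).1.ne_empty h'
            · exact hzne h'
          · exact h
        exact w_add_w_eq_zero hcard (Finset.card_pos.mpr hne)
      · simp only [hvz, if_false]
        have hcard : (insert v z).card = z.card + 1 := Finset.card_insert_of_notMem hvz
        have : w (insert v z) + w z = 0 :=
          w_add_w_eq_zero hcard (Finset.card_pos.mpr (hG z hzG).1)
        linarith
    · -- g a ≠ a
      intro z hz _
      by_cases hvz : v ∈ z
      · simp only [hvz, if_true]
        intro h
        have hnm := Finset.notMem_erase v z
        rw [h] at hnm
        exact hnm hvz
      · simp only [hvz, if_false]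
        intro h
        exact hvz (h ▸ Finset.mem_insert_self v z)
    · -- involution
      intro z hz
      have hzne := Finset.ne_of_mem_erase hz
      by_cases hvz : v ∈ z
      · simp only [hvz, if_true, Finset.notMem_erase, if_false]
        exact Finset.insert_erase hvz
      · simp only [hvz, if_false, Finset.mem_insert_self, if_true]
        exact Finset.erase_insert hvz
    · -- membership
      intro z hz
      have hzb := Finset.mem_of_mem_erase hz
      have hzne := Finset.ne_of_mem_erase hz
      simp only [ball, mem_filter] at hzb
      obtain ⟨hzG, y, hyG, hxy, hzy⟩ := hzb
      by_cases hvz : v ∈ z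
      · simp only [hvz, if_true]
        apply Finset.mem_erase.mpr
        have hne : (z.erase v).Nonempty := by
          rcases Finset.eq_empty_or_nonempty (z.erase v) with h | h
          · exfalso
            rcases (Finset.erase_eq_empty_iff z v).mp h with h' | h'
            · exact (hG z hzG).1.ne_empty h'
            · exact hzne h'
          · exact h
        refine ⟨?_, ?_⟩
        · intro h
          exact (Finset.notMem_erase v z) (h ▸ Finset.mem_singleton_self v)
        · simp only [ball, mem_filter]
          exact ⟨(hG z hzG).2 _ (Finset.erase_subset v z) hne, y, hyG, hxy,
            (Finset.erase_subset v z).trans hzy⟩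
      · simp only [hvz, if_false]
        apply Finset.mem_erase.mpr
        obtain ⟨u, hu⟩ := (hG z hzG).1
        have huv : u ≠ v := fun h => hvz (h ▸ hu)
        refine ⟨?_, ?_⟩
        · intro h
          have : u ∈ ({v} : Finset V) := h ▸ (Finset.mem_insert_of_mem hu)
          exact huv (Finset.mem_singleton.mp this)
        · have hvy : v ∈ y := hxy hv
          have hsub : insert v z ⊆ y := Finset.insert_subset hvy hzy
          simp only [ball, mem_filter]
          exact ⟨(hG y hyG).2 _ hsub (Finset.insert_nonempty v z), y, hyG, hxy, hsub⟩
  have := Finset.add_sum_erase (ball G x) w hvb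
  have hw1 : w ({v} : Finset V) = 1 := by simp [w]
  unfold chi
  rw [← this, key, hw1, add_zero]

lemma chi_sphere_add_chi_star (G : Finset (Finset V)) (hG : IsComplex G) (x : Finset V)
    (hx : x ∈ G) : chi (sphere G x) + chi (star G x) = 1 := by
  have hsub : star G x ⊆ ball G x := by
    intro y hy
    simp only [star, mem_filter] at hy
    simp only [ball, mem_filter]
    exact ⟨hy.1, y, hy.1, hy.2, subset_rfl⟩
  have := Finset.sum_sdiff (f := w) hsub
  have hball := chi_ball_eq_one G hG x hx
  unfold chi at *
  rw [sphere]
  linarith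

/-- every contractible finite abstract simplicial complex has `χ(G) = 1`. -/
theorem chi_eq_one_of_contractible {V : Type} [DecidableEq V]
    (G : Finset (Finset V)) (hG : IsComplex G) (hc : Contractible G) :
    chi G = 1 := by
  induction hc with
  | point v => simp [chi, w]
  | step G x hx hS hGd ihS ihG =>
    have h1 : chi (sphere G x) = 1 := ihS (isComplex_sphere G hG x)
    have h2 : chi (G \ star G x) = 1 := ihG (isComplex_sdiff_star G hG x)
    have h3 : chi (sphere G x) + chi (star G x) = 1 :=
      chi_sphere_add_chi_star G hG x hx
    have hsub : star G x ⊆ G := filter_subset _ _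
    have h4 := Finset.sum_sdiff (f := w) hsub
    unfold chi at *
    linarith

end SphereFormula
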